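/- Let S = M_{d_1}(ℂ) ⊕ ⋯ ⊕ M_{d_k}(ℂ), fix a component i and indices p, q, r, s ∈ {1,…,d_i} with (p,q) ≠ (1,1) ≠ (r,s), and write θ := x^i_{pq} = d_{e^i_{p1}⊗e^i_{1q}} and η := x^i_{rs} = d_{e^i_{r1}⊗e^i_{1s}}. Then for all z ∈ S: τ_{(12)}( (1⊗θ)(η(z)) − (η⊗1)(θ(z)) ) = e^i_{p1} ⊗ (e^i_{1q}·η)(z) + e^i_{1s} ⊗ (θ·e^i_{r1})(z) − [p = s] · e^i_{11} ⊗ d_{e^i_{r1}⊗e^i_{1q}}(z), where [p = s] is 1 if p = s and 0 otherwise. -/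

import Mathlib

open TensorProduct

set_option synthInstance.maxHeartbeats 1000000
set_option maxHeartbeats 1000000

noncomputable section

/-- The finite dimensional semisimple algebra `S = M_{d 0}(ℂ) ⊕ ⋯ ⊕ M_{d (k-1)}(ℂ)`. -/
abbrev MatS (k : ℕ) (d : Fin k → ℕ) : Type :=
  ∀ i : Fin k, Matrix (Fin (d i)) (Fin (d i)) ℂ

variable (k : ℕ) (d : Fin k → ℕ)

/-- `θ` is a double derivation for the outer bimodule structure on `S ⊗ S`. -/
def IsDD (θ : MatS k d →ₗ[ℂ] MatS k d ⊗[ℂ] MatS k d) : Prop :=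
  ∀ a b : MatS k d,
    θ (a * b) = (a ⊗ₜ[ℂ] (1 : MatS k d)) * θ b + θ a * ((1 : MatS k d) ⊗ₜ[ℂ] b)

/-- The space of double derivations `DDer(S)`. -/
def DDer : Submodule ℂ (MatS k d →ₗ[ℂ] MatS k d ⊗[ℂ] MatS k d) where
  carrier := {θ | IsDD k d θ}
  add_mem' := by
    intro θ η hθ hη a b
    simp only [LinearMap.add_apply, hθ a b, hη a b, mul_add, add_mul]
    abel
  zero_mem' := by intro a b; simp
  smul_mem' := by
    intro c θ hθ a b
    simp only [LinearMap.smul_apply, hθ a b, smul_add, mul_smul_comm, smul_mul_assoc]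

/-- The map `u ↦ (1 ⊗ s) * u * (t ⊗ 1)`, realizing the inner bimodule action
`(s·θ·t)(u) = θ(u)' t ⊗ s θ(u)''` after composition with `θ`. -/
def innerMap (s t : MatS k d) : MatS k d ⊗[ℂ] MatS k d →ₗ[ℂ] MatS k d ⊗[ℂ] MatS k d :=
  (LinearMap.mulRight ℂ (t ⊗ₜ[ℂ] (1 : MatS k d))).comp
    (LinearMap.mulLeft ℂ ((1 : MatS k d) ⊗ₜ[ℂ] s))

lemma innerMap_isDD (s t : MatS k d) (θ : MatS k d →ₗ[ℂ] MatS k d ⊗[ℂ] MatS k d)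
    (hθ : IsDD k d θ) : IsDD k d ((innerMap k d s t).comp θ) := by
  intro a b
  have h1 : ((1 : MatS k d) ⊗ₜ[ℂ] s) * (a ⊗ₜ[ℂ] (1 : MatS k d))
      = (a ⊗ₜ[ℂ] (1 : MatS k d)) * ((1 : MatS k d) ⊗ₜ[ℂ] s) := by
    simp [Algebra.TensorProduct.tmul_mul_tmul]
  have h2 : ((1 : MatS k d) ⊗ₜ[ℂ] b) * (t ⊗ₜ[ℂ] (1 : MatS k d))
      = (t ⊗ₜ[ℂ] (1 : MatS k d)) * ((1 : MatS k d) ⊗ₜ[ℂ] b) := by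
    simp [Algebra.TensorProduct.tmul_mul_tmul]
  simp only [LinearMap.comp_apply, hθ a b, innerMap, LinearMap.mulLeft_apply,
    LinearMap.mulRight_apply, mul_add, add_mul]
  congr 1
  · simp only [mul_assoc]
    rw [← mul_assoc, h1, mul_assoc]
  · simp only [mul_assoc]
    rw [h2]

/-- The inner `S`-bimodule action on `DDer(S)`:  `(s·θ·t)(u) = θ(u)' t ⊗ s θ(u)''`. -/
def innerDD (s t : MatS k d) (θ : DDer k d) : DDer k d :=
  ⟨(innerMap k d s t).comp θ.1, innerMap_isDD k d s t θ.1 θ.2⟩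

/-- The matrix unit `e^i_{pq}` of `S`. -/
def E (i : Fin k) (p q : Fin (d i)) : MatS k d :=
  Pi.single i (Matrix.single p q 1)

/-- The inner double derivation `d_x(y) = x (1 ⊗ y) - (y ⊗ 1) x`. -/
def dIn (x : MatS k d ⊗[ℂ] MatS k d) : MatS k d →ₗ[ℂ] MatS k d ⊗[ℂ] MatS k d :=
  (LinearMap.mulLeft ℂ x).comp (TensorProduct.mk ℂ (MatS k d) (MatS k d) 1)
    - (LinearMap.mulRight ℂ x).comp ((TensorProduct.mk ℂ (MatS k d) (MatS k d)).flip 1)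

lemma dIn_isDD (x : MatS k d ⊗[ℂ] MatS k d) : IsDD k d (dIn k d x) := by
  intro a b
  simp only [dIn, LinearMap.sub_apply, LinearMap.comp_apply, TensorProduct.mk_apply,
    LinearMap.flip_apply, LinearMap.mulLeft_apply, LinearMap.mulRight_apply, mul_sub, sub_mul]
  have h1 : ((1 : MatS k d) ⊗ₜ[ℂ] (a * b)) = ((1 : MatS k d) ⊗ₜ[ℂ] a) * ((1 : MatS k d) ⊗ₜ[ℂ] b) := by
    simp [Algebra.TensorProduct.tmul_mul_tmul]
  have h2 : ((a * b) ⊗ₜ[ℂ] (1 : MatS k d)) = (a ⊗ₜ[ℂ] (1 : MatS k d)) * (b ⊗ₜ[ℂ] (1 : MatS k d)) := by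
    simp [Algebra.TensorProduct.tmul_mul_tmul]
  have h3 : (a ⊗ₜ[ℂ] (1 : MatS k d)) * ((1 : MatS k d) ⊗ₜ[ℂ] b) = a ⊗ₜ[ℂ] b := by
    simp [Algebra.TensorProduct.tmul_mul_tmul]
  have h4 : ((1 : MatS k d) ⊗ₜ[ℂ] a) * (b ⊗ₜ[ℂ] (1 : MatS k d)) = b ⊗ₜ[ℂ] a := by
    simp [Algebra.TensorProduct.tmul_mul_tmul]
  rw [h1, h2]
  simp only [mul_assoc]
  abel


/-- Auxiliary bilinear map `(x, y) ↦ (w ↦ (1 ⊗ x) * w * (y ⊗ 1))`, used to multiply Sweedler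
components:  on pure tensors it sends `(x ⊗ y, u ⊗ v)` to `(u y) ⊗ (x v)`. -/
def mixAux (k : ℕ) (d : Fin k → ℕ) :
    MatS k d →ₗ[ℂ] MatS k d →ₗ[ℂ]
      (MatS k d ⊗[ℂ] MatS k d →ₗ[ℂ] MatS k d ⊗[ℂ] MatS k d) :=
  LinearMap.mk₂ ℂ
    (fun x y => (LinearMap.mulRight ℂ (y ⊗ₜ[ℂ] (1 : MatS k d))).comp
      (LinearMap.mulLeft ℂ ((1 : MatS k d) ⊗ₜ[ℂ] x)))
    (fun x x' y => by
      ext w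
      simp [TensorProduct.tmul_add, add_mul])
    (fun c x y => by
      ext w
      simp [TensorProduct.tmul_smul, smul_mul_assoc])
    (fun x y y' => by
      ext w
      simp [TensorProduct.add_tmul, mul_add])
    (fun c x y => by
      ext w
      simp [TensorProduct.smul_tmul', mul_smul_comm])

/-- `mixer z w` is, for `z = x ⊗ y` and `w = u ⊗ v`, the element `(u y) ⊗ (x v)`. -/
def mixer (k : ℕ) (d : Fin k → ℕ) :
    MatS k d ⊗[ℂ] MatS k d →ₗ[ℂ]
      (MatS k d ⊗[ℂ] MatS k d →ₗ[ℂ] MatS k d ⊗[ℂ] MatS k d) :=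
  TensorProduct.lift (mixAux k d)

/-- The double bracket associated to an ordered monomial `P = θ η` of double derivations:
`⟨⟨x,y⟩⟩_P = η(y)′ θ(x)″ ⊗ θ(x)′ η(y)″ − θ(y)′ η(x)″ ⊗ η(x)′ θ(y)″`. -/
def bracketP (k : ℕ) (d : Fin k → ℕ)
    (θ η : MatS k d →ₗ[ℂ] MatS k d ⊗[ℂ] MatS k d) (x y : MatS k d) :
    MatS k d ⊗[ℂ] MatS k d :=
  mixer k d (θ x) (η y) - mixer k d (η x) (θ y)

/-- The double bracket `⟨⟨−,−⟩⟩_P` of `P = θ η` as a bilinear map. -/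
def bracketOf (k : ℕ) (d : Fin k → ℕ)
    (θ η : MatS k d →ₗ[ℂ] MatS k d ⊗[ℂ] MatS k d) :
    MatS k d →ₗ[ℂ] MatS k d →ₗ[ℂ] MatS k d ⊗[ℂ] MatS k d :=
  LinearMap.mk₂ ℂ (fun x y => bracketP k d θ η x y)
    (fun x x' y => by simp only [bracketP, map_add, LinearMap.add_apply]; abel)
    (fun c x y => by simp only [bracketP, map_smul, LinearMap.smul_apply, smul_sub])
    (fun x y y' => by simp only [bracketP, map_add]; abel)
    (fun c x y => by simp only [bracketP, map_smul, smul_sub])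

/-- `σ(x ⊗ y ⊗ z) = z ⊗ x ⊗ y` on `S ⊗ S ⊗ S`. -/
def sigma3 (k : ℕ) (d : Fin k → ℕ) :
    (MatS k d ⊗[ℂ] MatS k d) ⊗[ℂ] MatS k d →ₗ[ℂ]
      (MatS k d ⊗[ℂ] MatS k d) ⊗[ℂ] MatS k d :=
  (TensorProduct.assoc ℂ (MatS k d) (MatS k d) (MatS k d)).symm.toLinearMap.comp
    (TensorProduct.comm ℂ (MatS k d ⊗[ℂ] MatS k d) (MatS k d)).toLinearMap

/-- The double Jacobi identity
`⟨⟨a,⟨⟨b,c⟩⟩⟩⟩_L + σ(⟨⟨b,⟨⟨c,a⟩⟩⟩⟩_L) + σ²(⟨⟨c,⟨⟨a,b⟩⟩⟩⟩_L) = 0`,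
where `⟨⟨a, u ⊗ v⟩⟩_L = ⟨⟨a, u⟩⟩ ⊗ v`. -/
def DoubleJacobi (k : ℕ) (d : Fin k → ℕ)
    (B : MatS k d →ₗ[ℂ] MatS k d →ₗ[ℂ] MatS k d ⊗[ℂ] MatS k d) : Prop :=
  ∀ a b c : MatS k d,
    TensorProduct.map (B a) LinearMap.id (B b c)
      + sigma3 k d (TensorProduct.map (B b) LinearMap.id (B c a))
      + sigma3 k d (sigma3 k d (TensorProduct.map (B c) LinearMap.id (B a b))) = 0

/-- The index `1` (first row/column index) in `Fin (d i)`. -/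
def o (k : ℕ) (d : Fin k → ℕ) (hd : ∀ i, 0 < d i) (i : Fin k) : Fin (d i) := ⟨0, hd i⟩

/-- The double derivation `y^{pq}_{ab} = d_{e^p_{a1} ⊗ e^q_{1b}}`. -/
def yy (k : ℕ) (d : Fin k → ℕ) (hd : ∀ i, 0 < d i) (p q : Fin k)
    (a : Fin (d p)) (b : Fin (d q)) : MatS k d →ₗ[ℂ] MatS k d ⊗[ℂ] MatS k d :=
  dIn k d (E k d p a (o k d hd p) ⊗ₜ[ℂ] E k d q (o k d hd q) b)

/-- The double derivation `x^i_{pq} = d_{e^i_{p1} ⊗ e^i_{1q}}`. -/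
def xx (k : ℕ) (d : Fin k → ℕ) (hd : ∀ i, 0 < d i) (i : Fin k)
    (p q : Fin (d i)) : MatS k d →ₗ[ℂ] MatS k d ⊗[ℂ] MatS k d :=
  dIn k d (E k d i p (o k d hd i) ⊗ₜ[ℂ] E k d i (o k d hd i) q)


/-- `(1 ⊗ θ)(x ⊗ z) = x ⊗ θ(z)` in `S ⊗ (S ⊗ S)`. -/
def oneTensor (k : ℕ) (d : Fin k → ℕ) (θ : MatS k d →ₗ[ℂ] MatS k d ⊗[ℂ] MatS k d) :
    MatS k d ⊗[ℂ] MatS k d →ₗ[ℂ] MatS k d ⊗[ℂ] (MatS k d ⊗[ℂ] MatS k d) :=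
  TensorProduct.map LinearMap.id θ

/-- `(η ⊗ 1)(x ⊗ z) = η(x) ⊗ z`, viewed in `S ⊗ (S ⊗ S)`. -/
def tensorOne (k : ℕ) (d : Fin k → ℕ) (η : MatS k d →ₗ[ℂ] MatS k d ⊗[ℂ] MatS k d) :
    MatS k d ⊗[ℂ] MatS k d →ₗ[ℂ] MatS k d ⊗[ℂ] (MatS k d ⊗[ℂ] MatS k d) :=
  (TensorProduct.assoc ℂ (MatS k d) (MatS k d) (MatS k d)).toLinearMap.comp
    (TensorProduct.map η LinearMap.id)

/-- `τ₍₁₂₎(x ⊗ y ⊗ z) = y ⊗ x ⊗ z` on `S ⊗ (S ⊗ S)`. -/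
def tau12 (k : ℕ) (d : Fin k → ℕ) :
    MatS k d ⊗[ℂ] (MatS k d ⊗[ℂ] MatS k d) →ₗ[ℂ]
      MatS k d ⊗[ℂ] (MatS k d ⊗[ℂ] MatS k d) :=
  (TensorProduct.assoc ℂ (MatS k d) (MatS k d) (MatS k d)).toLinearMap.comp
    ((TensorProduct.map (TensorProduct.comm ℂ (MatS k d) (MatS k d)).toLinearMap
        LinearMap.id).comp
      (TensorProduct.assoc ℂ (MatS k d) (MatS k d) (MatS k d)).symm.toLinearMap)

/-!
The identity holds for arbitrary inner double derivations `θ = d_{a ⊗ b}` and `η = d_{c ⊗ e}`: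
expanding on pure tensors, the two terms `c ⊗ e z a ⊗ b` of `(1 ⊗ θ)(η z)` and `(η ⊗ 1)(θ z)`
cancel, and after `τ₍₁₂₎` the remaining six terms group into
`a ⊗ (1 ⊗ b) η(z) + e ⊗ θ(z) (c ⊗ 1) - e a ⊗ d_{c ⊗ b}(z)`.
For matrix units `e a = e^i_{1s} e^i_{p1}` is `[p = s] e^i_{11}`.
-/

lemma E_mul_E (i : Fin k) (a b c e : Fin (d i)) :
    E k d i a b * E k d i c e = if b = c then E k d i a e else 0 := by
  rw [E, E, ← Pi.single_mul]
  split_ifs with h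
  · subst h
    rw [Matrix.single_mul_single_same, one_mul]
    rfl
  · rw [Matrix.single_mul_single_of_ne (h := h), Pi.single_zero]

lemma dIn_tmul_apply (a b z : MatS k d) :
    dIn k d (a ⊗ₜ[ℂ] b) z = a ⊗ₜ[ℂ] (b * z) - (z * a) ⊗ₜ[ℂ] b := by
  simp [dIn, Algebra.TensorProduct.tmul_mul_tmul]

lemma tau12_tmul (x y w : MatS k d) :
    tau12 k d (x ⊗ₜ[ℂ] (y ⊗ₜ[ℂ] w)) = y ⊗ₜ[ℂ] (x ⊗ₜ[ℂ] w) := rfl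

lemma oneTensor_tmul (θ : MatS k d →ₗ[ℂ] MatS k d ⊗[ℂ] MatS k d) (x y : MatS k d) :
    oneTensor k d θ (x ⊗ₜ[ℂ] y) = x ⊗ₜ[ℂ] θ y := rfl

lemma tensorOne_dIn_tmul (a b x y : MatS k d) :
    tensorOne k d (dIn k d (a ⊗ₜ[ℂ] b)) (x ⊗ₜ[ℂ] y) =
      a ⊗ₜ[ℂ] ((b * x) ⊗ₜ[ℂ] y) - (x * a) ⊗ₜ[ℂ] (b ⊗ₜ[ℂ] y) := by
  simp [tensorOne, dIn_tmul_apply, TensorProduct.sub_tmul]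

lemma tau12_oneTensor_dIn_sub_tensorOne_dIn (a b c e z : MatS k d) :
    tau12 k d (oneTensor k d (dIn k d (a ⊗ₜ[ℂ] b)) (dIn k d (c ⊗ₜ[ℂ] e) z)
        - tensorOne k d (dIn k d (c ⊗ₜ[ℂ] e)) (dIn k d (a ⊗ₜ[ℂ] b) z)) =
      a ⊗ₜ[ℂ] (((1 : MatS k d) ⊗ₜ[ℂ] b) * dIn k d (c ⊗ₜ[ℂ] e) z)
        + e ⊗ₜ[ℂ] (dIn k d (a ⊗ₜ[ℂ] b) z * (c ⊗ₜ[ℂ] (1 : MatS k d)))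
        - (e * a) ⊗ₜ[ℂ] dIn k d (c ⊗ₜ[ℂ] b) z := by
  simp only [dIn_tmul_apply, map_sub, oneTensor_tmul, tensorOne_dIn_tmul, tau12_tmul,
    TensorProduct.tmul_sub, Algebra.TensorProduct.tmul_mul_tmul, sub_mul, mul_sub, one_mul,
    mul_one, mul_assoc]
  abel

theorem schouten_right_component_formula_general (k : ℕ) (d : Fin k → ℕ) (hd : ∀ i, 0 < d i)
    (i : Fin k) (p q r s : Fin (d i)) :
    ∀ z : MatS k d,
      tau12 k d (oneTensor k d (xx k d hd i p q) (xx k d hd i r s z)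
          - tensorOne k d (xx k d hd i r s) (xx k d hd i p q z)) =
        E k d i p (o k d hd i) ⊗ₜ[ℂ]
            (((1 : MatS k d) ⊗ₜ[ℂ] E k d i (o k d hd i) q) * xx k d hd i r s z)
          + E k d i (o k d hd i) s ⊗ₜ[ℂ]
              (xx k d hd i p q z * (E k d i r (o k d hd i) ⊗ₜ[ℂ] (1 : MatS k d)))
          - (if p = s then (1 : ℂ) else 0) •
              (E k d i (o k d hd i) (o k d hd i) ⊗ₜ[ℂ]
                dIn k d (E k d i r (o k d hd i) ⊗ₜ[ℂ] E k d i (o k d hd i) q) z) := by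
  intro z
  rw [xx, xx, tau12_oneTensor_dIn_sub_tensorOne_dIn, E_mul_E]
  by_cases h : p = s
  · rw [if_pos h.symm, if_pos h, one_smul]
  · rw [if_neg (Ne.symm h), if_neg h, zero_smul, TensorProduct.zero_tmul]

/-- The right component of the double Schouten bracket formula for
`⟨⟨x^i_{pq}, x^i_{rs}⟩⟩`: with `θ = x^i_{pq}` and `η = x^i_{rs}`, for all `z ∈ S`,
`τ₍₁₂₎((1⊗θ)(η z) − (η⊗1)(θ z)) = e^i_{p1} ⊗ (e^i_{1q}·η)(z) + e^i_{1s} ⊗ (θ·e^i_{r1})(z)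
− [p = s] e^i_{11} ⊗ d_{e^i_{r1} ⊗ e^i_{1q}}(z)`,
where `(s·η)(z) = (1 ⊗ s) * η z` and `(θ·t)(z) = θ z * (t ⊗ 1)` are the inner actions. -/
theorem schouten_right_component_formula (k : ℕ) (d : Fin k → ℕ) (hd : ∀ i, 0 < d i)
    (i : Fin k) (p q r s : Fin (d i))
    (hpq : ¬(p = o k d hd i ∧ q = o k d hd i)) (hrs : ¬(r = o k d hd i ∧ s = o k d hd i)) :
    ∀ z : MatS k d,
      tau12 k d (oneTensor k d (xx k d hd i p q) (xx k d hd i r s z)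
          - tensorOne k d (xx k d hd i r s) (xx k d hd i p q z)) =
        E k d i p (o k d hd i) ⊗ₜ[ℂ]
            (((1 : MatS k d) ⊗ₜ[ℂ] E k d i (o k d hd i) q) * xx k d hd i r s z)
          + E k d i (o k d hd i) s ⊗ₜ[ℂ]
              (xx k d hd i p q z * (E k d i r (o k d hd i) ⊗ₜ[ℂ] (1 : MatS k d)))
          - (if p = s then (1 : ℂ) else 0) •
              (E k d i (o k d hd i) (o k d hd i) ⊗ₜ[ℂ]
                dIn k d (E k d i r (o k d hd i) ⊗ₜ[ℂ] E k d i (o k d hd i) q) z) :=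
  schouten_right_component_formula_general k d hd i p q r s
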